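/- For x ∈ (1/4, 1], set s_x = (3 + 4x − 4√(x(x+2)))/7 and t_x = (8x − 1)/7, and define G_x^{−1}(z) = −(7/4)z + √(7z + (1−x)²) + x − 1 for z ∈ [0, s_x], G_x^{−1}(z) = (1/64)(7 + 8x − 7z)(1 + 7z) for z ∈ (s_x, t_x], and G_x^{−1}(z) = (1/256)(15 + 8x − 7z)(1 + 8x + 7z) for z ∈ (t_x, 1]. Then for every z ∈ [0,1], G_x(G_x^{−1}(z)) = z, where G_x(y) = (8/7)·(F_x(y) − (1/2)·min(y, 1/4)). -/
import Mathlib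


open MeasureTheory

/-- The distribution function `F_x` of `U·x + U·(1−U)` for `U` uniform on `[0,1]`. -/
noncomputable def F (x y : ℝ) : ℝ :=
  if y < x then (1 + x - Real.sqrt ((1 + x) ^ 2 - 4 * y)) / 2
  else if y < ((1 + x) / 2) ^ 2 then 1 - Real.sqrt ((1 + x) ^ 2 - 4 * y)
  else 1

/-- `G_x(y) = (8/7)·(F_x(y) − (1/2)·min(y, 1/4))`. -/
noncomputable def G (x y : ℝ) : ℝ := 8 / 7 * (F x y - (1 / 2) * min y (1 / 4))

/-- The explicit inverse of `G_x` for `x ∈ (1/4,1]`, given piecewise with breakpoints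
`s_x = (3 + 4x − 4√(x(x+2)))/7` and `t_x = (8x − 1)/7`. -/
noncomputable def Ginv (x z : ℝ) : ℝ :=
  if z ≤ (3 + 4 * x - 4 * Real.sqrt (x * (x + 2))) / 7 then
    -(7 / 4) * z + Real.sqrt (7 * z + (1 - x) ^ 2) + x - 1
  else if z ≤ (8 * x - 1) / 7 then
    (1 / 64) * (7 + 8 * x - 7 * z) * (1 + 7 * z)
  else
    (1 / 256) * (15 + 8 * x - 7 * z) * (1 + 8 * x + 7 * z)

lemma F_eq_left {x y : ℝ} (hx : x ≤ 1) (h : y ≤ x) :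
    F x y = (1 + x - Real.sqrt ((1 + x) ^ 2 - 4 * y)) / 2 := by
  rw [F]
  rcases lt_or_eq_of_le h with h' | h'
  · rw [if_pos h']
  · subst h'
    rw [if_neg (lt_irrefl _)]
    split_ifs with hb
    · have hsq : (1 + y) ^ 2 - 4 * y = (1 - y) ^ 2 := by ring
      rw [hsq, Real.sqrt_sq (by linarith)]
      ring
    · have hy1 : y = 1 := by nlinarith [not_lt.mp hb]
      subst hy1
      norm_num

lemma F_eq_right {x y : ℝ} (hxy : x ≤ y) (hb : y ≤ ((1 + x) / 2) ^ 2) :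
    F x y = 1 - Real.sqrt ((1 + x) ^ 2 - 4 * y) := by
  rw [F, if_neg (not_lt.mpr hxy)]
  rcases lt_or_eq_of_le hb with hb' | hb'
  · rw [if_pos hb']
  · rw [if_neg (by rw [hb']; exact lt_irrefl _)]
    have hz : (1 + x) ^ 2 - 4 * y = 0 := by rw [hb']; ring
    rw [hz, Real.sqrt_zero]
    ring

set_option maxHeartbeats 1600000 in
/-- For `x ∈ (1/4,1]`, the piecewise formula `Ginv x` is a right inverse of `G_x` on
`[0,1]`: `G_x(G_x^{−1}(z)) = z` for every `z ∈ [0,1]`. -/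
theorem G_inverse_large_x (x : ℝ) (hx : x ∈ Set.Ioc (1 / 4 : ℝ) 1)
    (z : ℝ) (hz : z ∈ Set.Icc (0:ℝ) 1) :
    G x (Ginv x z) = z := by
  obtain ⟨hx1, hx2⟩ := hx
  obtain ⟨hz0, hz1⟩ := hz
  have hq0 : (0:ℝ) ≤ Real.sqrt (x * (x + 2)) := Real.sqrt_nonneg _
  have hq2 : Real.sqrt (x * (x + 2)) ^ 2 = x * (x + 2) :=
    Real.sq_sqrt (by nlinarith)
  set q := Real.sqrt (x * (x + 2)) with hqdef
  have hqle : q ≤ 2 := by nlinarith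
  rw [Ginv]
  split_ifs with h1 h2
  · -- first branch : z ≤ s
    have hr0 : (0:ℝ) ≤ Real.sqrt (7 * z + (1 - x) ^ 2) := Real.sqrt_nonneg _
    have hr2 : Real.sqrt (7 * z + (1 - x) ^ 2) ^ 2 = 7 * z + (1 - x) ^ 2 :=
      Real.sq_sqrt (by nlinarith)
    set r := Real.sqrt (7 * z + (1 - x) ^ 2) with hrdef
    have h7z : 7 * z ≤ 3 + 4 * x - 4 * q := by linarith
    have hrle : r ≤ 2 - q := by
      have h := Real.sqrt_le_sqrt (show 7 * z + (1 - x) ^ 2 ≤ (2 - q) ^ 2 by nlinarith)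
      rwa [Real.sqrt_sq (by linarith)] at h
    have key : (7 * z) ^ 2 - (6 + 8 * x) * (7 * z) + (9 - 8 * x) ≥ 0 := by
      nlinarith [mul_nonneg (show (0:ℝ) ≤ 3 + 4 * x - 4 * q - 7 * z by linarith)
        (show (0:ℝ) ≤ 3 + 4 * x + 4 * q - 7 * z by linarith)]
    have hy4 : r ≤ 7 / 4 * z + 5 / 4 - x := by
      have h := Real.sqrt_le_sqrt
        (show 7 * z + (1 - x) ^ 2 ≤ (7 / 4 * z + 5 / 4 - x) ^ 2 by nlinarith)
      rwa [Real.sqrt_sq (by linarith)] at h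
    have hle14 : -(7 / 4) * z + r + x - 1 ≤ 1 / 4 := by linarith
    have hltx : -(7 / 4) * z + r + x - 1 ≤ x := by linarith
    rw [G, F_eq_left hx2 hltx]
    have hsq : (1 + x) ^ 2 - 4 * (-(7 / 4) * z + r + x - 1) = (2 - r) ^ 2 := by
      nlinarith [hr2]
    rw [hsq, Real.sqrt_sq (by linarith), min_eq_left hle14]
    ring
  · -- second branch : s < z ≤ t
    have h1' : (3 + 4 * x - 4 * q) / 7 < z := lt_of_not_ge h1
    have hy14 : (1:ℝ) / 4 ≤ 1 / 64 * (7 + 8 * x - 7 * z) * (1 + 7 * z) := by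
      nlinarith [mul_nonneg (show (0:ℝ) ≤ 7 * z - (3 + 4 * x - 4 * q) by linarith)
        (show (0:ℝ) ≤ 3 + 4 * x + 4 * q - 7 * z by linarith)]
    have hyx : 1 / 64 * (7 + 8 * x - 7 * z) * (1 + 7 * z) ≤ x := by
      nlinarith [mul_nonneg (show (0:ℝ) ≤ 8 * x - 1 - 7 * z by linarith)
        (show (0:ℝ) ≤ 7 - 7 * z by linarith)]
    rw [G, F_eq_left hx2 hyx]
    have hsq : (1 + x) ^ 2 - 4 * (1 / 64 * (7 + 8 * x - 7 * z) * (1 + 7 * z))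
        = ((3 + 4 * x - 7 * z) / 4) ^ 2 := by ring
    rw [hsq, Real.sqrt_sq (by linarith), min_eq_right hy14]
    ring
  · -- third branch : t < z ≤ 1
    have h2' : (8 * x - 1) / 7 < z := lt_of_not_ge h2
    have hxy : x ≤ 1 / 256 * (15 + 8 * x - 7 * z) * (1 + 8 * x + 7 * z) := by
      nlinarith [mul_nonneg (show (0:ℝ) ≤ 7 * z - (8 * x - 1) by linarith)
        (show (0:ℝ) ≤ 15 - 8 * x - 7 * z by linarith)]
    have hyb : 1 / 256 * (15 + 8 * x - 7 * z) * (1 + 8 * x + 7 * z) ≤ ((1 + x) / 2) ^ 2 := by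
      have hid : ((1 + x) / 2) ^ 2 - 1 / 256 * (15 + 8 * x - 7 * z) * (1 + 8 * x + 7 * z)
          = ((7 - 7 * z) / 16) ^ 2 := by ring
      linarith [sq_nonneg ((7 - 7 * z) / 16)]
    have hy14 : (1:ℝ) / 4 ≤ 1 / 256 * (15 + 8 * x - 7 * z) * (1 + 8 * x + 7 * z) := by
      linarith
    rw [G, F_eq_right hxy hyb]
    have hsq : (1 + x) ^ 2 - 4 * (1 / 256 * (15 + 8 * x - 7 * z) * (1 + 8 * x + 7 * z))
        = ((7 - 7 * z) / 8) ^ 2 := by ring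
    rw [hsq, Real.sqrt_sq (by linarith), min_eq_right hy14]
    ring
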